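/- For every natural number n, Σ_{k=0}^{n-1} (-1)^k (2k+1)/((n-k)(n+k+1)) · ( Σ_{m=k}^{n-1} (-1)^m (2m+1)/((n-m)(n+m+1)) ) = (1/2)(H_{2n} - H_n)^2 - H_{2n}/(2n+1) + (1/2) Σ_{k=1}^{2n} 1/k^2. -/

import Mathlib

/-!
Write `a k` for the `k`-th summand. The left side is half of `(∑ a k)² + ∑ (a k)²`. By partial
fractions `a k = (-1)^k (1/(n-k) - 1/(n+k+1))`, and as `k` runs over `0, …, n-1` the indices
`n - k` and `n + k + 1` together run exactly once over `1, …, 2n`. Hence `∑ a k` is, up to sign,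
the alternating sum `∑_{j ≤ 2n} (-1)^(j+1)/j = H_{2n} - H_n`, while, using
`2/((n-k)(n+k+1)) = (2/(2n+1)) (1/(n-k) + 1/(n+k+1))`, the sum of squares becomes
`∑_{j ≤ 2n} (1/j² - (2/(2n+1)) (1/j))`.
-/

open Finset

/-- The `N`-th harmonic number `H_N = ∑_{k=1}^N 1/k` (with `H_0 = 0`). -/
noncomputable def H (N : ℕ) : ℝ := ∑ k ∈ Finset.Icc 1 N, (1 : ℝ) / k

theorem two_mul_sum_mul_sum_Ico {R : Type*} [CommRing R] (f : ℕ → R) (n : ℕ) :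
    2 * ∑ k ∈ range n, f k * ∑ m ∈ Ico k n, f m
      = (∑ k ∈ range n, f k) ^ 2 + ∑ k ∈ range n, f k ^ 2 := by
  induction n with
  | zero => simp
  | succ n ih =>
    have hIco : ∀ k ∈ range n, f k * ∑ m ∈ Ico k (n + 1), f m
        = f k * ∑ m ∈ Ico k n, f m + f k * f n := fun k hk => by
      rw [sum_Ico_succ_top (mem_range.mp hk).le, mul_add]
    simp only [sum_range_succ, sum_congr rfl hIco, sum_add_distrib, ← sum_mul,
      Nat.Ico_succ_singleton, sum_singleton]
    linear_combination ih

theorem sum_range_reflect_add_shift {M : Type*} [AddCommMonoid M] (g : ℕ → M) (n : ℕ) :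
    ∑ k ∈ range n, (g (n - k) + g (n + k + 1)) = ∑ j ∈ Icc 1 (2 * n), g j := by
  have hlow : ∑ k ∈ range n, g (n - k) = ∑ k ∈ range n, g (k + 1) := by
    rw [← sum_range_reflect]
    exact sum_congr rfl fun k hk => by
      congr 1; have := mem_range.mp hk; omega
  rw [sum_add_distrib, hlow, ← sum_range_add (fun k => g (k + 1)), ← two_mul,
    range_eq_Ico, sum_Ico_add' g, zero_add, Ico_add_one_right_eq_Icc]

theorem H_succ (N : ℕ) : H (N + 1) = H N + 1 / (N + 1) := by
  rw [H, H, sum_Icc_succ_top (by omega)]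
  push_cast; ring

theorem H_two_mul_sub_H (n : ℕ) :
    H (2 * n) - H n = ∑ j ∈ Icc 1 (2 * n), (-1 : ℝ) ^ (j + 1) / j := by
  induction n with
  | zero => simp [H]
  | succ n ih =>
    rw [show 2 * (n + 1) = 2 * n + 1 + 1 by ring, sum_Icc_succ_top (by omega),
      sum_Icc_succ_top (by omega), ← ih, H_succ, H_succ, H_succ]
    have h2n : (-1 : ℝ) ^ (2 * n) = 1 := by simp [pow_mul]
    simp only [pow_succ, h2n]
    push_cast
    field_simp
    ring

theorem alt_term_eq_reflect_add_shift {n k : ℕ} (hk : k < n) :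
    (-1 : ℝ) ^ k * (2 * k + 1) / ((n - k) * (n + k + 1))
      = (-1) ^ (n + 1) * ((-1) ^ (n - k + 1) / ↑(n - k)
          + (-1) ^ (n + k + 1 + 1) / ↑(n + k + 1)) := by
  have hlow : (-1 : ℝ) ^ (n + 1) * (-1) ^ (n - k + 1) = (-1) ^ k := by
    rw [← pow_add, show n + 1 + (n - k + 1) = k + 2 * (n - k + 1) by omega, pow_add, pow_mul]
    simp
  have hhigh : (-1 : ℝ) ^ (n + 1) * (-1) ^ (n + k + 1 + 1) = -(-1) ^ k := by
    rw [← pow_add, show n + 1 + (n + k + 1 + 1) = k + 1 + 2 * (n + 1) by omega, pow_add,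
      pow_mul]
    simp [pow_succ]
  have hnk : (n : ℝ) - k ≠ 0 := sub_ne_zero.mpr (by exact_mod_cast hk.ne')
  rw [mul_add ((-1 : ℝ) ^ (n + 1)), mul_div_assoc', mul_div_assoc', hlow, hhigh,
    Nat.cast_sub hk.le]
  push_cast
  field_simp
  ring

theorem alt_term_sq_eq_reflect_add_shift {n k : ℕ} (hk : k < n) :
    ((-1 : ℝ) ^ k * (2 * k + 1) / ((n - k) * (n + k + 1))) ^ 2
      = (1 / (↑(n - k) : ℝ) ^ 2 - 2 / (2 * n + 1) * (1 / ↑(n - k)))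
        + (1 / (↑(n + k + 1) : ℝ) ^ 2 - 2 / (2 * n + 1) * (1 / ↑(n + k + 1))) := by
  have hnk : (n : ℝ) - k ≠ 0 := sub_ne_zero.mpr (by exact_mod_cast hk.ne')
  rw [div_pow, mul_pow, ← pow_mul, pow_mul', neg_one_sq, one_pow, one_mul, Nat.cast_sub hk.le]
  push_cast
  field_simp
  ring

/-- For every natural number `n`,
`∑_{k=0}^{n-1} (-1)^k (2k+1)/((n-k)(n+k+1)) ⬝ (∑_{m=k}^{n-1} (-1)^m (2m+1)/((n-m)(n+m+1)))
  = (1/2)(H_{2n} - H_n)^2 - H_{2n}/(2n+1) + (1/2) ∑_{k=1}^{2n} 1/k²`. -/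
theorem double_alternating_sum (n : ℕ) :
    ∑ k ∈ Finset.range n,
        (-1 : ℝ) ^ k * (2 * k + 1) / (((n : ℝ) - k) * ((n : ℝ) + k + 1)) *
          (∑ m ∈ Finset.Ico k n,
            (-1 : ℝ) ^ m * (2 * m + 1) / (((n : ℝ) - m) * ((n : ℝ) + m + 1))) =
      (1 / 2) * (H (2 * n) - H n) ^ 2 - H (2 * n) / (2 * n + 1)
        + (1 / 2) * ∑ k ∈ Finset.Icc 1 (2 * n), (1 : ℝ) / (k : ℝ) ^ 2 := by
  set a : ℕ → ℝ :=
    fun k => (-1 : ℝ) ^ k * (2 * k + 1) / (((n : ℝ) - k) * ((n : ℝ) + k + 1))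
  have hsum : ∑ k ∈ range n, a k = (-1) ^ (n + 1) * (H (2 * n) - H n) := by
    rw [H_two_mul_sub_H, ← sum_range_reflect_add_shift, mul_sum]
    exact sum_congr rfl fun k hk => alt_term_eq_reflect_add_shift (mem_range.mp hk)
  have hsq : ∑ k ∈ range n, a k ^ 2
      = ∑ j ∈ Icc 1 (2 * n), (1 : ℝ) / (j : ℝ) ^ 2 - 2 / (2 * n + 1) * H (2 * n) := by
    rw [H, mul_sum, ← sum_sub_distrib, ← sum_range_reflect_add_shift]
    exact sum_congr rfl fun k hk => alt_term_sq_eq_reflect_add_shift (mem_range.mp hk)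
  have htri := two_mul_sum_mul_sum_Ico a n
  rw [hsum, hsq, mul_pow, ← pow_mul, pow_mul', neg_one_sq, one_pow, one_mul] at htri
  linear_combination htri / 2
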